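/- arXiv:1608.01583 — 2 statements merged into one kernel-verified Lean document; each statement's English description precedes it below -/
import Mathlib

section
/- Let G be a group with a finite generating set A and word length |·|, acting by isometries on a pseudometric space (M, ρ), and let μ ∈ M. Let c > 0, let L ≥ 1 be an integer, and let B > 0 be a real number such that ρ(μ, h·μ) ≤ B for all h ∈ G with |h| ≤ L. Suppose g ∈ G satisfies ρ(μ, g·μ) ≥ c·|g|, and suppose g = g_1 g_2 ⋯ g_n with |g_j| ≤ L for all j and |g_1| + ⋯ + |g_n| = |g|. Setting h_0 = 1 and h_j = g_1 ⋯ g_j, the number of indices j ∈ {1, …, n} with ρ(h_{j−1}·μ, h_j·μ) ≥ (c/2)·|g_j| is at least c·|g| / (2B). -/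
/-- The word length of `g` with respect to a generating set `A`: the smallest `n`
such that `g` is a product of `n` elements of `A ∪ A⁻¹`. -/
noncomputable def wordLength {G : Type*} [Group G] (A : Set G) (g : G) : ℕ :=
  sInf {n : ℕ | ∃ l : List G, (∀ x ∈ l, x ∈ A ∪ A⁻¹) ∧ l.length = n ∧ l.prod = g}

/-!
The orbit of `μ` along `1, h₁, …, hₙ = g` has total length `∑ ρ(μ, g_j·μ) ≥ ρ(μ, g·μ) ≥ c|g|`.
Blocks that fail to make progress contribute less than `(c/2)|g_j|` each, hence less than
`(c/2)|g|` together, so the remaining `≥ (c/2)|g|` is carried by the progressing blocks, each of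
which contributes at most `B`.
-/

open Finset

theorem div_le_card_filter_half_mul_le {ι : Type*} (s : Finset ι) (w d : ι → ℝ) {c B : ℝ}
    (hc : 0 ≤ c) (hB : 0 < B) (hw : ∀ j ∈ s, 0 ≤ w j) (hd : ∀ j ∈ s, d j ≤ B)
    (htotal : c * ∑ j ∈ s, w j ≤ ∑ j ∈ s, d j) :
    c * (∑ j ∈ s, w j) / (2 * B) ≤ #{j ∈ s | c / 2 * w j ≤ d j} := by
  set good := {j ∈ s | c / 2 * w j ≤ d j}
  have hgood : ∑ j ∈ good, d j ≤ #good * B := by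
    simpa using sum_le_card_nsmul good d B fun j hj => hd j (mem_filter.mp hj).1
  have hbad : ∑ j ∈ s with ¬c / 2 * w j ≤ d j, d j ≤ c / 2 * ∑ j ∈ s, w j := calc
    _ ≤ ∑ j ∈ s with ¬c / 2 * w j ≤ d j, c / 2 * w j :=
      sum_le_sum fun j hj => (not_le.mp (mem_filter.mp hj).2).le
    _ ≤ ∑ j ∈ s, c / 2 * w j :=
      sum_le_sum_of_subset_of_nonneg (filter_subset _ _) fun j hj _ => by
        have := hw j hj; positivity
    _ = c / 2 * ∑ j ∈ s, w j := (mul_sum _ _ _).symm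
  have hsplit := sum_filter_add_sum_filter_not s (fun j => c / 2 * w j ≤ d j) d
  rw [div_le_iff₀ (by positivity)]
  linarith

section IsometricAction

variable {G M : Type*} [Group G] [PseudoMetricSpace M] [MulAction G M] [IsIsometricSMul G M]

theorem dist_smul_mul_smul_le (x : M) (a b : G) :
    dist x ((a * b) • x) ≤ dist x (a • x) + dist x (b • x) := calc
  _ ≤ dist x (a • x) + dist (a • x) (a • b • x) := by
    rw [mul_smul]; exact dist_triangle _ _ _
  _ = dist x (a • x) + dist x (b • x) := by rw [dist_smul]

theorem dist_smul_prod_ofFn_le_sum {n : ℕ} (x : M) (gs : Fin n → G) :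
    dist x ((List.ofFn gs).prod • x) ≤ ∑ j, dist x (gs j • x) := by
  induction n with
  | zero => simp
  | succ n ih =>
    rw [List.ofFn_succ, List.prod_cons, Fin.sum_univ_succ]
    exact (dist_smul_mul_smul_le x _ _).trans (add_le_add le_rfl (ih _))

theorem dist_prod_take_smul_prod_take_succ_smul (l : List G) (x : M) {i : ℕ}
    (hi : i < l.length) :
    dist ((l.take i).prod • x) ((l.take (i + 1)).prod • x) = dist x (l[i] • x) := by
  rw [List.prod_take_succ l i hi, mul_smul, dist_smul]

end IsometricAction

theorem linear_progress_block_count_general {G : Type*} [Group G]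
    (A : Set G)
    {M : Type*} [PseudoMetricSpace M] [MulAction G M]
    (hiso : ∀ (h : G) (x y : M), dist (h • x) (h • y) = dist x y)
    (μ : M) (c : ℝ) (hc : 0 < c) (L : ℕ)
    (B : ℝ) (hB : 0 < B)
    (hBbd : ∀ h : G, wordLength A h ≤ L → dist μ (h • μ) ≤ B)
    (g : G) (hg : c * (wordLength A g : ℝ) ≤ dist μ (g • μ))
    (n : ℕ) (gs : Fin n → G)
    (hprod : (List.ofFn gs).prod = g)
    (hblock : ∀ j : Fin n, wordLength A (gs j) ≤ L)
    (hsum : ∑ j : Fin n, wordLength A (gs j) = wordLength A g) :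
    c * (wordLength A g : ℝ) / (2 * B) ≤
      ((Finset.univ.filter fun j : Fin n =>
        (c / 2) * (wordLength A (gs j) : ℝ) ≤
          dist (((List.ofFn gs).take (j : ℕ)).prod • μ)
               (((List.ofFn gs).take ((j : ℕ) + 1)).prod • μ)).card : ℝ) := by
  have : IsIsometricSMul G M := ⟨fun h => Isometry.of_dist_eq (hiso h)⟩
  have hstep (j : Fin n) : dist (((List.ofFn gs).take j).prod • μ)
      (((List.ofFn gs).take (j + 1)).prod • μ) = dist μ (gs j • μ) := by
    rw [dist_prod_take_smul_prod_take_succ_smul _ _ (by simp), List.getElem_ofFn]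
  have hwordLength : (wordLength A g : ℝ) = ∑ j, (wordLength A (gs j) : ℝ) := by
    exact_mod_cast hsum.symm
  simp_rw [hstep, hwordLength]
  refine div_le_card_filter_half_mul_le _ _ _ hc.le hB (fun _ _ => Nat.cast_nonneg _)
    (fun j _ => hBbd _ (hblock j)) ?_
  rw [← hwordLength]
  exact hg.trans (hprod ▸ dist_smul_prod_ofFn_le_sum μ gs)

/-- (Inequality (E:min wins) of the paper.) Let `G`, with finite
generating set `A`, act by isometries on a pseudometric space `(M, ρ)`, and let
`μ ∈ M`. Let `c > 0`, `L ≥ 1` an integer, and `B > 0` with `ρ(μ, h·μ) ≤ B` whenever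
`|h| ≤ L`. If `ρ(μ, g·μ) ≥ c·|g|` and `g = g_1 ⋯ g_n` with `|g_j| ≤ L` for all `j`
and `|g_1| + ⋯ + |g_n| = |g|`, then, with `h_j = g_1 ⋯ g_j` (and `h_0 = 1`), the
number of indices `j` with `ρ(h_{j-1}·μ, h_j·μ) ≥ (c/2)·|g_j|` is at least
`c·|g| / (2B)`. -/
theorem linear_progress_block_count {G : Type*} [Group G]
    (A : Set G) (hAfin : A.Finite) (hAgen : Subgroup.closure A = ⊤)
    {M : Type*} [PseudoMetricSpace M] [MulAction G M]
    (hiso : ∀ (h : G) (x y : M), dist (h • x) (h • y) = dist x y)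
    (μ : M) (c : ℝ) (hc : 0 < c) (L : ℕ) (hL : 1 ≤ L)
    (B : ℝ) (hB : 0 < B)
    (hBbd : ∀ h : G, wordLength A h ≤ L → dist μ (h • μ) ≤ B)
    (g : G) (hg : c * (wordLength A g : ℝ) ≤ dist μ (g • μ))
    (n : ℕ) (gs : Fin n → G)
    (hprod : (List.ofFn gs).prod = g)
    (hblock : ∀ j : Fin n, wordLength A (gs j) ≤ L)
    (hsum : ∑ j : Fin n, wordLength A (gs j) = wordLength A g) :
    c * (wordLength A g : ℝ) / (2 * B) ≤
      ((Finset.univ.filter fun j : Fin n =>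
        (c / 2) * (wordLength A (gs j) : ℝ) ≤
          dist (((List.ofFn gs).take (j : ℕ)).prod • μ)
               (((List.ofFn gs).take ((j : ℕ) + 1)).prod • μ)).card : ℝ) :=
  linear_progress_block_count_general A hiso μ c hc L B hB hBbd g hg n gs hprod hblock hsum
end

section
/- Let G be a group with a finite generating set A and word length |·|, and fix g ∈ G with |g| = m together with a geodesic word for g, i.e. a sequence 1 = h_0, h_1, …, h_m = g in G with h_{t−1}^{-1} h_t ∈ A ∪ A⁻¹ and |h_t| = t for all t. Let b > 0, let n ≥ 1, and for each i ∈ {1, …, n} let (C_i, d_i) be a metric space, let π_i : G → C_i be a map, and for each j ≠ i let ∂_{i,j} ∈ C_i be a point. Assume: (H1) d_i(π_i(h), π_i(ha)) ≤ b for all h ∈ G, all a ∈ A ∪ A⁻¹, and all i; (H2) d_i(π_i(1), π_i(g)) ≥ 10b for all i; (H3) for all h ∈ G and all i ≠ j, min( d_i(π_i(h), ∂_{i,j}), d_j(π_j(h), ∂_{j,i}) ) < b; (H4) for all i < j, d_i(π_i(g), ∂_{i,j}) < b and d_j(π_j(1), ∂_{j,i}) < b. For each 1 ≤ j ≤ n−1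 let t_j be the largest t ∈ {0, 1, …, m} with d_j(π_j(h_t), π_j(g)) ≥ 2b (such t exists by (H2)), and set t_0 = 0 and t_n = m. Then: (1) t_i < t_j for all 0 ≤ i < j ≤ n; and (2) for all 0 ≤ i < ℓ ≤ j ≤ n with 1 ≤ ℓ ≤ n, | d_ℓ(π_ℓ(1), π_ℓ(g)) − d_ℓ(π_ℓ(h_{t_i}), π_ℓ(h_{t_j})) | < 5b. -/
/-- (Abstract form of Lemma 4.2, "path traversed in order".)
Let `1 = h_0, h_1, …, h_m = g` be a geodesic word for `g` (so `h_{t-1}⁻¹ h_t ∈ A ∪ A⁻¹`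
and `|h_t| = t`). Suppose for `i = 1, …, n` we have metric spaces `C_i`, projections
`proj_i : G → C_i`, and points `bdry_{i,j} ∈ C_i` for `j ≠ i`, satisfying:
(H1) generators move each projection at most `b`;
(H2) `d_i(proj_i(1), proj_i(g)) ≥ 10b`;
(H3) the Behrstock inequality `min(d_i(proj_i(h), bdry_{i,j}), d_j(proj_j(h), bdry_{j,i})) < b`;
(H4) for `i < j`: `d_i(proj_i(g), bdry_{i,j}) < b` and `d_j(proj_j(1), bdry_{j,i}) < b`.
For `1 ≤ j ≤ n-1`, let `t_j` be the largest `t ≤ m` with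
`d_j(proj_j(h_t), proj_j(g)) ≥ 2b`, with `t_0 = 0`, `t_n = m`. Then the `t_j` are
strictly increasing, and for `0 ≤ i < ℓ ≤ j ≤ n`,
`|d_ℓ(proj_ℓ(1), proj_ℓ(g)) − d_ℓ(proj_ℓ(h_{t_i}), proj_ℓ(h_{t_j}))| < 5b`. -/
theorem path_traversed_in_order {G : Type*} [Group G]
    (A : Set G) (hAfin : A.Finite) (hAgen : Subgroup.closure A = ⊤)
    (g : G) (m : ℕ) (hm : wordLength A g = m)
    (h : ℕ → G) (h0 : h 0 = 1) (hmg : h m = g)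
    (hstep : ∀ t, 1 ≤ t → t ≤ m → (h (t - 1))⁻¹ * h t ∈ A ∪ A⁻¹)
    (hlen : ∀ t ≤ m, wordLength A (h t) = t)
    (b : ℝ) (hb : 0 < b)
    (n : ℕ) (hn : 1 ≤ n)
    (C : ℕ → Type*) [∀ i, MetricSpace (C i)]
    (proj : ∀ i, G → C i) (bdry : ∀ i : ℕ, ℕ → C i)
    (H1 : ∀ (x : G), ∀ a ∈ A ∪ A⁻¹, ∀ i, 1 ≤ i → i ≤ n →
      dist (proj i x) (proj i (x * a)) ≤ b)
    (H2 : ∀ i, 1 ≤ i → i ≤ n → 10 * b ≤ dist (proj i 1) (proj i g))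
    (H3 : ∀ (x : G), ∀ i j, 1 ≤ i → i ≤ n → 1 ≤ j → j ≤ n → i ≠ j →
      min (dist (proj i x) (bdry i j)) (dist (proj j x) (bdry j i)) < b)
    (H4 : ∀ i j, 1 ≤ i → i < j → j ≤ n →
      dist (proj i g) (bdry i j) < b ∧ dist (proj j (1 : G)) (bdry j i) < b)
    (t : ℕ → ℕ) (ht0 : t 0 = 0) (htn : t n = m)
    (htdef : ∀ j, 1 ≤ j → j ≤ n - 1 →
      t j ≤ m ∧ 2 * b ≤ dist (proj j (h (t j))) (proj j g))
    (htmax : ∀ j, 1 ≤ j → j ≤ n - 1 →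
      ∀ s ≤ m, 2 * b ≤ dist (proj j (h s)) (proj j g) → s ≤ t j) :
    (∀ i j, i < j → j ≤ n → t i < t j) ∧
    (∀ i ℓ j, i < ℓ → ℓ ≤ j → j ≤ n →
      |dist (proj ℓ (1 : G)) (proj ℓ g) - dist (proj ℓ (h (t i))) (proj ℓ (h (t j)))|
        < 5 * b) := by

  -- m ≥ 1
  have hm1 : 1 ≤ m := by
    by_contra hc
    push_neg at hc
    interval_cases m
    have h10 := H2 1 le_rfl hn
    rw [← hmg, h0, dist_self] at h10
    linarith
  -- consecutive steps move projections by at most b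
  have hstep' : ∀ i, 1 ≤ i → i ≤ n → ∀ s, s + 1 ≤ m →
      dist (proj i (h s)) (proj i (h (s + 1))) ≤ b := by
    intro i hi1 hin s hs
    have ha := hstep (s + 1) (Nat.le_add_left 1 s) hs
    simp only [Nat.add_sub_cancel] at ha
    have := H1 (h s) _ ha i hi1 hin
    rwa [mul_inv_cancel_left] at this
  -- key Behrstock consequences
  have key1 : ∀ i j, 1 ≤ i → i < j → j ≤ n → ∀ x : G,
      2 * b ≤ dist (proj i x) (proj i g) → dist (proj j x) (proj j (1 : G)) < 2 * b := by
    intro i j hi1 hij hjn x hx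
    obtain ⟨hg4, h14⟩ := H4 i j hi1 hij hjn
    have h3 := H3 x i j hi1 (le_trans (le_of_lt hij) hjn) (le_trans hi1 (le_of_lt hij)) hjn
      (Nat.ne_of_lt hij)
    have hlow : b ≤ dist (proj i x) (bdry i j) := by
      have htri := dist_triangle (proj i x) (bdry i j) (proj i g)
      rw [dist_comm (bdry i j)] at htri
      linarith
    have hj : dist (proj j x) (bdry j i) < b := by
      rcases min_lt_iff.mp h3 with hc | hc
      · linarith
      · exact hc
    have htri := dist_triangle (proj j x) (bdry j i) (proj j (1 : G))
    rw [dist_comm (bdry j i)] at htri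
    linarith
  have key2 : ∀ i j, 1 ≤ i → i < j → j ≤ n → ∀ x : G,
      2 * b ≤ dist (proj j x) (proj j (1 : G)) → dist (proj i x) (proj i g) < 2 * b := by
    intro i j hi1 hij hjn x hx
    obtain ⟨hg4, h14⟩ := H4 i j hi1 hij hjn
    have h3 := H3 x i j hi1 (le_trans (le_of_lt hij) hjn) (le_trans hi1 (le_of_lt hij)) hjn
      (Nat.ne_of_lt hij)
    have hlow : b ≤ dist (proj j x) (bdry j i) := by
      have htri := dist_triangle (proj j x) (bdry j i) (proj j (1 : G))
      rw [dist_comm (bdry j i)] at htri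
      linarith
    have hi : dist (proj i x) (bdry i j) < b := by
      rcases min_lt_iff.mp h3 with hc | hc
      · exact hc
      · linarith
    have htri := dist_triangle (proj i x) (bdry i j) (proj i g)
    rw [dist_comm (bdry i j)] at htri
    linarith
  -- t j < m for middle indices
  have tlt : ∀ j, 1 ≤ j → j ≤ n - 1 → t j < m := by
    intro j hj1 hj2
    obtain ⟨hle, hdist⟩ := htdef j hj1 hj2
    rcases lt_or_eq_of_le hle with hlt | heq
    · exact hlt
    · rw [heq, hmg, dist_self] at hdist; linarith
  have tnext : ∀ j, 1 ≤ j → j ≤ n - 1 → dist (proj j (h (t j + 1))) (proj j g) < 2 * b := by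
    intro j hj1 hj2
    by_contra hc
    push_neg at hc
    have := htmax j hj1 hj2 (t j + 1) (tlt j hj1 hj2) hc
    omega
  have hBj : ∀ j, 1 ≤ j → j ≤ n - 1 → dist (proj j (h (t j))) (proj j g) < 3 * b := by
    intro j hj1 hj2
    have hjn : j ≤ n := le_trans hj2 (Nat.sub_le n 1)
    have h1 := hstep' j hj1 hjn (t j) (tlt j hj1 hj2)
    have h2 := tnext j hj1 hj2
    have h3 := dist_triangle (proj j (h (t j))) (proj j (h (t j + 1))) (proj j g)
    linarith
  have hB : ∀ ℓ j, 1 ≤ ℓ → ℓ ≤ j → j ≤ n → dist (proj ℓ (h (t j))) (proj ℓ g) < 3 * b := by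
    intro ℓ j hℓ1 hℓj hjn
    rcases eq_or_lt_of_le hjn with rfl | hjlt
    · rw [htn, hmg, dist_self]; linarith
    · have hj2 : j ≤ n - 1 := by omega
      rcases eq_or_lt_of_le hℓj with rfl | hℓlt
      · exact hBj ℓ hℓ1 hj2
      · have hj1 : 1 ≤ j := le_trans hℓ1 hℓj
        have hjd := hBj j hj1 hj2
        have h10 := H2 j hj1 hjn
        have htri := dist_triangle (proj j (1 : G)) (proj j (h (t j))) (proj j g)
        have h2b : 2 * b ≤ dist (proj j (h (t j))) (proj j (1 : G)) := by
          rw [dist_comm]; linarith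
        have := key2 ℓ j hℓ1 hℓlt hjn (h (t j)) h2b
        linarith
  have hA : ∀ i ℓ, i < ℓ → ℓ ≤ n → dist (proj ℓ (1 : G)) (proj ℓ (h (t i))) < 2 * b := by
    intro i ℓ hiℓ hℓn
    rcases Nat.eq_zero_or_pos i with rfl | hi1
    · rw [ht0, h0, dist_self]; linarith
    · have hi2 : i ≤ n - 1 := by omega
      obtain ⟨_, hd⟩ := htdef i hi1 hi2
      have := key1 i ℓ hi1 hiℓ hℓn (h (t i)) hd
      rw [dist_comm]; exact this
  have part1 : ∀ i j, i < j → j ≤ n → t i < t j := by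
    intro i j hij hjn
    rcases Nat.eq_zero_or_pos i with rfl | hi1
    · rw [ht0]
      rcases eq_or_lt_of_le hjn with rfl | hjlt
      · rw [htn]; omega
      · have hj1 : 1 ≤ j := hij
        have hj2 : j ≤ n - 1 := by omega
        have hs : 2 * b ≤ dist (proj j (h 1)) (proj j g) := by
          have h10 := H2 j hj1 hjn
          have hst := hstep' j hj1 hjn 0 (by omega)
          simp only [zero_add, h0] at hst
          have htri := dist_triangle (proj j (1 : G)) (proj j (h 1)) (proj j g)
          linarith
        have := htmax j hj1 hj2 1 hm1 hs
        omega
    · rcases eq_or_lt_of_le hjn with rfl | hjlt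
      · have hi2 : i ≤ j - 1 := by omega
        have := tlt i hi1 hi2
        omega
      · have hj1 : 1 ≤ j := by omega
        have hj2 : j ≤ n - 1 := by omega
        obtain ⟨hile, hid⟩ := htdef i hi1 (by omega)
        have hk := key1 i j hi1 hij hjn (h (t i)) hid
        have h10 := H2 j hj1 hjn
        rw [dist_comm] at hk
        have h2b : 2 * b ≤ dist (proj j (h (t i))) (proj j g) := by
          have htri := dist_triangle (proj j (1 : G)) (proj j (h (t i))) (proj j g)
          linarith
        have hle := htmax j hj1 hj2 (t i) hile h2b
        rcases lt_or_eq_of_le hle with hlt | heq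
        · exact hlt
        · exfalso
          have hnx := tnext j hj1 hj2
          have hst := hstep' j hj1 hjn (t j) (tlt j hj1 hj2)
          have htri1 := dist_triangle (proj j (1 : G)) (proj j (h (t j)))
            (proj j (h (t j + 1)))
          have htri2 := dist_triangle (proj j (1 : G)) (proj j (h (t j + 1))) (proj j g)
          rw [heq] at hk
          linarith
  refine ⟨part1, ?_⟩
  intro i ℓ j hiℓ hℓj hjn
  have hℓ1 : 1 ≤ ℓ := by omega
  have ha := hA i ℓ hiℓ (le_trans hℓj hjn)
  have hbB := hB ℓ j hℓ1 hℓj hjn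
  have htri := dist_dist_dist_le (proj ℓ (1 : G)) (proj ℓ g) (proj ℓ (h (t i)))
    (proj ℓ (h (t j)))
  rw [Real.dist_eq] at htri
  have hc : dist (proj ℓ g) (proj ℓ (h (t j))) = dist (proj ℓ (h (t j))) (proj ℓ g) :=
    dist_comm _ _
  linarith
end
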